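/- arXiv:math/0607770 — 3 statements merged into one kernel-verified Lean document; each statement's English description precedes it below -/
import Mathlib

section
/- Let k ≥ 3 and let L_k be a p-symmetrical k-partition of V^(k). Then the (k-1)-partition p̂L_k (the collection of all (k-1)-projections of the classes of L_k) is itself p-symmetrical. -/
/-- A `k`-tuple of pairwise distinct elements of `V` (an element of `V^(k)`). -/
abbrev Tup (k : ℕ) (V : Type*) := Fin k ↪ V

/-- Delete the `i`-th coordinate of a `(k+1)`-tuple: the `i`-th `k`-projection `p̂_i`. -/
def projTup {V : Type*} {k : ℕ} (i : Fin (k + 1)) (α : Tup (k + 1) V) : Tup k V :=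
  ⟨α ∘ i.succAbove, α.injective.comp Fin.succAbove_right_injective⟩

/-- The `i`-th projection `p̂_i(U)` of a `(k+1)`-relation `U`. -/
def projSet {V : Type*} {k : ℕ} (i : Fin (k + 1)) (U : Set (Tup (k + 1) V)) :
    Set (Tup k V) :=
  projTup i '' U

/-- `p̂L`: the collection of all `k`-projections of the classes of `L`. -/
def pPart {V : Type*} {k : ℕ} (L : Set (Set (Tup (k + 1) V))) : Set (Set (Tup k V)) :=
  {S | ∃ U ∈ L, ∃ i : Fin (k + 1), S = projSet i U}

/-- `L` is p-symmetrical: any two projections of any two classes are equal or disjoint. -/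
def IsPSymm {V : Type*} {k : ℕ} (L : Set (Set (Tup (k + 1) V))) : Prop :=
  ∀ U ∈ L, ∀ U' ∈ L, ∀ i i' : Fin (k + 1),
    projSet i U = projSet i' U' ∨ Disjoint (projSet i U) (projSet i' U')

/-- Permute the coordinates of a tuple: `permTup π α = α ∘ π`. -/
def permTup {V : Type*} {k : ℕ} (π : Equiv.Perm (Fin k)) (α : Tup k V) : Tup k V :=
  π.toEmbedding.trans α

/-- `L` is s-symmetrical: permuting coordinates of a class yields a class. -/
def IsSSymm {V : Type*} {k : ℕ} (L : Set (Set (Tup k V))) : Prop :=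
  ∀ U ∈ L, ∀ π : Equiv.Perm (Fin k), (permTup π '' U) ∈ L

/-- Multiplicity of the `l`-tuple `β` in the multiprojection of `U` to the
(distinct) coordinate positions `w`. -/
noncomputable def multProj {V : Type*} {k l : ℕ} (U : Set (Tup k V)) (w : Fin l ↪ Fin k)
    (β : Tup l V) : ℕ :=
  {α ∈ U | w.trans α = β}.ncard

/-- A `k`-relation is mp-symmetrical if in each of its multiprojections every
occurring tuple occurs with the same multiplicity. -/
def IsMpSymmRel {V : Type*} {k : ℕ} (U : Set (Tup k V)) : Prop :=
  ∀ (l : ℕ) (w : Fin l ↪ Fin k) (β γ : Tup l V),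
    multProj U w β ≠ 0 → multProj U w γ ≠ 0 → multProj U w β = multProj U w γ

/-- `L` is mp-symmetrical if every class is. -/
def IsMpSymm {V : Type*} {k : ℕ} (L : Set (Set (Tup k V))) : Prop :=
  ∀ U ∈ L, IsMpSymmRel U

/-- A regular partition: s-, p- and mp-symmetrical. -/
def IsRegularPartition {V : Type*} {k : ℕ} (L : Set (Set (Tup (k + 1) V))) : Prop :=
  IsSSymm L ∧ IsPSymm L ∧ IsMpSymm L

/-- Two `(k+1)`-tuples are `q̂L`-related iff for each `i` their `i`-th projections lie
in the same class of `L`. -/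
def qRel {V : Type*} {k : ℕ} (L : Set (Set (Tup k V))) (α β : Tup (k + 1) V) : Prop :=
  ∀ i : Fin (k + 1), ∀ U ∈ L, (projTup i α ∈ U ↔ projTup i β ∈ U)

/-- `q̂L`: the `(k+1)`-partition assembled from the `k`-partition `L`. -/
def qPart {V : Type*} {k : ℕ} (L : Set (Set (Tup k V))) : Set (Set (Tup (k + 1) V)) :=
  {S | ∃ α : Tup (k + 1) V, S = {β | qRel L α β}}

/-- `α` and `β` are `i`-th projections, for the same `i`, of `(k+1)`-tuples lying in the
same class of `q̂L`. -/
def pqRelBase {V : Type*} {k : ℕ} (L : Set (Set (Tup k V))) (α β : Tup k V) : Prop :=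
  ∃ i : Fin (k + 1), ∃ α' β' : Tup (k + 1) V,
    projTup i α' = α ∧ projTup i β' = β ∧ qRel L α' β'

/-- `p̂q̂L`: the `k`-partition obtained by assembling `L` into `q̂L` and projecting back
(the generated equivalence of `pqRelBase`). -/
def pqPart {V : Type*} {k : ℕ} (L : Set (Set (Tup k V))) : Set (Set (Tup k V)) :=
  {S | ∃ α : Tup k V, S = {β | Relation.EqvGen (pqRelBase L) α β}}

/-- One-step reconstruction `q̂p̂(U)` of a `(k+1)`-relation from its projections. -/
def qpSet {V : Type*} {k : ℕ} (U : Set (Tup (k + 1) V)) : Set (Tup (k + 1) V) :=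
  {α | ∀ i : Fin (k + 1), projTup i α ∈ projSet i U}

/-- Iterated reconstruction `q̂^m p̂^m U` (deleting one coordinate at a time and
reassembling). -/
def qpIter (V : Type*) : (m : ℕ) → (k : ℕ) → Set (Tup k V) → Set (Tup k V)
  | 0, _, U => U
  | _ + 1, 0, U => U
  | m + 1, k + 1, U =>
      {α | ∀ i : Fin (k + 1), projTup i α ∈ qpIter V m k (projSet i U)}

/-- Iterated assembling `q̂^i L` of a `k`-partition. -/
def qIter (V : Type*) : (i : ℕ) → (k : ℕ) → Set (Set (Tup k V)) → Set (Set (Tup (k + i) V))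
  | 0, _, L => L
  | i + 1, k, L => qPart (qIter V i k L)

/-- `p̂^i M`: all projections of the classes of a `(k+i)`-partition onto `k`-element
(ordered) sets of coordinate positions. -/
def pIter {V : Type*} (i k : ℕ) (M : Set (Set (Tup (k + i) V))) : Set (Set (Tup k V)) :=
  {S | ∃ U ∈ M, ∃ w : Fin k ↪o Fin (k + i), S = (fun α => w.toEmbedding.trans α) '' U}

/-- The coordinatewise action of a permutation of `V` on tuples. -/
def actTup {V : Type*} {k : ℕ} (g : Equiv.Perm V) (α : Tup k V) : Tup k V :=
  α.trans g.toEmbedding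

/-- `Aut(L)`: the permutations of `V` preserving every class of `L`. -/
def AutP {V : Type*} {k : ℕ} (L : Set (Set (Tup k V))) : Set (Equiv.Perm V) :=
  {g | ∀ U ∈ L, actTup g '' U = U}

/-- The orbit of a tuple under a set of permutations. -/
def orbitOf {V : Type*} {k : ℕ} (G : Set (Equiv.Perm V)) (α : Tup k V) :
    Set (Tup k V) :=
  {β | ∃ g ∈ G, actTup g α = β}

/-- `L` is automorphic: its classes are exactly the orbits of `Aut(L)` on `V^(k)`. -/
def Automorphic {V : Type*} {k : ℕ} (L : Set (Set (Tup k V))) : Prop :=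
  ∀ S : Set (Tup k V), S ∈ L ↔ ∃ α : Tup k V, S = orbitOf (AutP L) α

/-- `Orb_k(G)`: the partition of `V^(k)` into orbits of the coordinatewise action of `G`. -/
def OrbPart {V : Type*} (k : ℕ) (G : Subgroup (Equiv.Perm V)) : Set (Set (Tup k V)) :=
  {S | ∃ α : Tup k V, S = orbitOf {g | g ∈ G} α}

/-!
Let `U`, `U'` be classes of `p̂L` and `γ ∈ U`, `γ' ∈ U'` with `p̂_i γ = p̂_i' γ'`. If the
deleted entries `γ i` and `γ' i'` differ, the two tuples are the projections `p̂_c δ`, `p̂_d δ`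
of a single `(k+2)`-tuple `δ`. By p-symmetry of `L`, `U = p̂_c W` and `U' = p̂_d W` for the
class `W` of `δ`, and `p̂_i ∘ p̂_c = p̂_i' ∘ p̂_d` since both delete the same two positions, so
`p̂_i U = p̂_i' U'`. If `γ i = γ' i'`, compare both with the tuple obtained from `p̂_i γ` by
inserting at `i'` a value not occurring in `γ`; such a value exists because `V` carries
`(k+2)`-tuples.
-/

open Set Function

namespace Fin.Embedding

variable {α : Type*} {n : ℕ}

theorem _root_.Fin.insertNth_injective {p : Fin (n + 1)} {a : α} {f : Fin n → α}
    (hf : Injective f) (ha : a ∉ range f) : Injective (p.insertNth a f) := by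
  intro x y h
  induction x using p.succAboveCases <;> induction y using p.succAboveCases <;>
    simp_all [hf.eq_iff, eq_comm]

def insertNth (p : Fin (n + 1)) (x : Fin n ↪ α) {a : α} (ha : a ∉ range x) : Fin (n + 1) ↪ α :=
  ⟨p.insertNth a x, Fin.insertNth_injective x.injective ha⟩

@[simp]
theorem insertNth_apply_same (p : Fin (n + 1)) (x : Fin n ↪ α) {a : α} (ha : a ∉ range x) :
    insertNth p x ha p = a := by
  simp [insertNth]

@[simp]
theorem insertNth_apply_succAbove (p : Fin (n + 1)) (x : Fin n ↪ α) {a : α} (ha : a ∉ range x)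
    (i : Fin n) : insertNth p x ha (p.succAbove i) = x i := by
  simp [insertNth]

theorem exists_notMem_range (x : Fin n ↪ α) (y : Fin (n + 1) ↪ α) : ∃ a, a ∉ range x := by
  by_contra! h
  have := Fin.le_of_embedding (y.trans (Equiv.ofBijective x ⟨x.injective, h⟩).symm.toEmbedding)
  omega

end Fin.Embedding

section Projection

variable {V : Type*} {k : ℕ}

@[simp]
lemma projTup_apply (i : Fin (k + 1)) (α : Tup (k + 1) V) (n : Fin k) :
    projTup i α n = α (i.succAbove n) :=
  rfl

lemma range_projTup_subset (i : Fin (k + 1)) (α : Tup (k + 1) V) :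
    range (projTup i α) ⊆ range α := by
  rintro _ ⟨n, rfl⟩
  exact ⟨_, rfl⟩

@[simp]
lemma projTup_insertNth (p : Fin (k + 1)) (x : Tup k V) {a : V} (ha : a ∉ range x) :
    projTup p (Fin.Embedding.insertNth p x ha) = x := by
  ext; simp

lemma projTup_projTup_swap (c : Fin (k + 2)) (i : Fin (k + 1)) (α : Tup (k + 2) V) :
    projTup (i.predAbove c) (projTup (c.succAbove i) α) = projTup i (projTup c α) := by
  ext; simp [Fin.succAbove_succAbove_succAbove_predAbove]

lemma projSet_projSet_swap (c : Fin (k + 2)) (i : Fin (k + 1)) (W : Set (Tup (k + 2) V)) :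
    projSet (i.predAbove c) (projSet (c.succAbove i) W) = projSet i (projSet c W) := by
  simp only [projSet, image_image, projTup_projTup_swap]

-- Every `i'` is of the form `i.predAbove c` (`Fin.predAbove_surjective`).
lemma exists_projTup_eq_projTup_eq {γ γ' : Tup (k + 1) V} {i : Fin (k + 1)} {c : Fin (k + 2)}
    (h : projTup i γ = projTup (i.predAbove c) γ') (hne : γ i ≠ γ' (i.predAbove c)) :
    ∃ δ : Tup (k + 2) V, projTup c δ = γ ∧ projTup (c.succAbove i) δ = γ' := by
  have hfresh : γ' (i.predAbove c) ∉ range γ := by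
    rintro ⟨m, hm⟩
    obtain rfl | ⟨n, rfl⟩ := i.eq_self_or_eq_succAbove m
    · exact hne hm
    · rw [← projTup_apply, h, projTup_apply] at hm
      exact Fin.succAbove_ne _ n (γ'.injective hm)
  refine ⟨Fin.Embedding.insertNth c γ hfresh, by simp, ?_⟩
  ext m
  obtain rfl | ⟨n, rfl⟩ := (i.predAbove c).eq_self_or_eq_succAbove m
  · simp [Fin.succAbove_succAbove_predAbove]
  · simp only [projTup_apply, Fin.succAbove_succAbove_succAbove_predAbove,
      Fin.Embedding.insertNth_apply_succAbove]
    exact congr($h n)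

end Projection

section Partition

variable {V : Type*} {k : ℕ} {L : Set (Set (Tup (k + 2) V))}

lemma eq_projSet_of_mem_of_mem (hp : IsPSymm L) {U : Set (Tup (k + 1) V)} (hU : U ∈ pPart L)
    {W : Set (Tup (k + 2) V)} (hW : W ∈ L) {c : Fin (k + 2)} {γ : Tup (k + 1) V}
    (hγU : γ ∈ U) (hγW : γ ∈ projSet c W) : U = projSet c W := by
  obtain ⟨W₀, hW₀, j, rfl⟩ := hU
  exact (hp W₀ hW₀ W hW j c).resolve_right (not_disjoint_iff.2 ⟨γ, hγU, hγW⟩)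

lemma sUnion_pPart_eq_univ (hL : ⋃₀ L = univ) (δ₀ : Tup (k + 2) V) : ⋃₀ pPart L = univ := by
  refine eq_univ_of_forall fun γ => ?_
  obtain ⟨a, ha⟩ := Fin.Embedding.exists_notMem_range γ δ₀
  set δ := Fin.Embedding.insertNth 0 γ ha
  obtain ⟨W, hW, hδW⟩ := mem_sUnion.1 (hL ▸ mem_univ δ)
  exact ⟨projSet 0 W, ⟨W, hW, 0, rfl⟩, δ, hδW, projTup_insertNth 0 γ ha⟩

lemma projSet_eq_projSet_of_ne (hL : ⋃₀ L = univ) (hp : IsPSymm L)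
    {U U' : Set (Tup (k + 1) V)} (hU : U ∈ pPart L) (hU' : U' ∈ pPart L)
    {γ γ' : Tup (k + 1) V} (hγ : γ ∈ U) (hγ' : γ' ∈ U') {i i' : Fin (k + 1)}
    (h : projTup i γ = projTup i' γ') (hne : γ i ≠ γ' i') :
    projSet i U = projSet i' U' := by
  obtain ⟨c, rfl⟩ := i.predAbove_surjective i'
  obtain ⟨δ, hδ, hδ'⟩ := exists_projTup_eq_projTup_eq h hne
  obtain ⟨W, hW, hδW⟩ := mem_sUnion.1 (hL ▸ mem_univ δ)
  rw [eq_projSet_of_mem_of_mem hp hU hW hγ ⟨δ, hδW, hδ⟩,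
    eq_projSet_of_mem_of_mem hp hU' hW hγ' ⟨δ, hδW, hδ'⟩, projSet_projSet_swap]

end Partition

-- The paper's `k` is `k + 2` here.
theorem pPart_isPSymm_of_isPSymm_general {V : Type*} (k : ℕ)
    (L : Set (Set (Tup (k + 2) V))) (hL : Setoid.IsPartition L) (hp : IsPSymm L) :
    IsPSymm (pPart L) := by
  have hcover := hL.sUnion_eq_univ
  intro U hU U' hU' i i'
  refine or_iff_not_imp_right.2 fun hmeet => ?_
  obtain ⟨β, ⟨γ, hγ, rfl⟩, γ', hγ', hβ⟩ := not_disjoint_iff.1 hmeet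
  by_cases hv : γ i = γ' i'
  · obtain ⟨W, -, j, rfl⟩ := id hU
    obtain ⟨δ, -, -⟩ := id hγ
    obtain ⟨a, ha⟩ := Fin.Embedding.exists_notMem_range γ δ
    set γ'' := Fin.Embedding.insertNth i' (projTup i γ) fun h => ha (range_projTup_subset i γ h)
    have hγ''i' : γ'' i' = a := by simp [γ'']
    obtain ⟨Y, hY, hγ''Y⟩ := mem_sUnion.1 (sUnion_pPart_eq_univ hcover δ ▸ mem_univ γ'')
    rw [projSet_eq_projSet_of_ne hcover hp hU hY hγ hγ''Y (i' := i') (by simp [γ''])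
        (by rw [hγ''i']; exact fun h => ha ⟨i, h⟩),
      projSet_eq_projSet_of_ne hcover hp hU' hY hγ' hγ''Y (i' := i') (by simp [γ'', hβ])
        (by rw [hγ''i', ← hv]; exact fun h => ha ⟨i, h⟩)]
  · exact projSet_eq_projSet_of_ne hcover hp hU hU' hγ hγ' hβ.symm hv

/-- If `k ≥ 3` and `L` is a p-symmetrical `k`-partition of `V^(k)`
(here the paper's `k` is `k + 2`), then the `(k-1)`-partition `p̂L` is p-symmetrical. -/
theorem pPart_isPSymm_of_isPSymm {V : Type*} [Fintype V] (k : ℕ) (hk : 3 ≤ k + 2)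
    (L : Set (Set (Tup (k + 2) V))) (hL : Setoid.IsPartition L) (hp : IsPSymm L) :
    IsPSymm (pPart L) :=
  pPart_isPSymm_of_isPSymm_general k L hL hp
end

section
/- Let G be a group of permutations of a finite set V with |V| = n and let k ≤ n. Then G is k-closed (i.e. Aut(Orb_k(G)) = G) if and only if the n-orbit partition Orb_n(G) of V^(n) is k-full, i.e. (q̂p̂)-reconstruction from k-projections recovers every class: q̂^{n−k} p̂^{n−k} U = U for every orbit U of G on V^(n). -/
/-!
Write `n = |V|`. A tuple in `V^(n)` enumerates all of `V`, so `G` acts regularly on `V^(n)`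
and an orbit `U = Gα₀` there is in bijection with `G`. Unfolding the iterated
reconstruction, `α ∈ q̂^{n−k} p̂^{n−k} U` says exactly that every `k`-subtuple of `α` lies in
the `G`-orbit of the corresponding subtuple of `α₀`, i.e. that the permutation `g` with
`gα₀ = α` preserves every orbit of `Orb_k(G)`. So `U` is `k`-full iff every such `g` lies in
`G`, which is `k`-closedness.
-/

namespace Fin

theorem exists_eq_trans_succAboveEmb {k n : ℕ} (u : Fin k ↪ Fin (n + 1)) (hk : k ≤ n) :
    ∃ (i : Fin (n + 1)) (w : Fin k ↪ Fin n), u = w.trans (succAboveEmb i) := by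
  obtain ⟨i, hi⟩ : ∃ i, ∀ j, u j ≠ i := by
    by_contra! hsurj
    have := Fintype.card_le_of_surjective u hsurj
    simp only [Fintype.card_fin] at this
    omega
  choose f hf using fun j => exists_succAbove_eq (hi j)
  refine ⟨i, ⟨f, fun a b hab => u.injective ?_⟩, ?_⟩
  · rw [← hf a, ← hf b, hab]
  · ext j
    exact congrArg Fin.val (hf j).symm

end Fin

section

variable {V : Type*}

theorem mem_qpIter_add_iff {k : ℕ} :
    ∀ {m : ℕ} {U : Set (Tup (k + m) V)} {α : Tup (k + m) V},
      α ∈ qpIter V m (k + m) U ↔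
        ∀ w : Fin k ↪ Fin (k + m), w.trans α ∈ (fun β => w.trans β) '' U
  | 0, U, α => by
    refine ⟨fun hα w => ⟨α, hα, rfl⟩, fun h => ?_⟩
    obtain ⟨β, hβ, hβα⟩ := h (Function.Embedding.refl _)
    simp only [Function.Embedding.refl_trans] at hβα
    exact hβα ▸ hβ
  | m + 1, U, α => by
    change (∀ i, projTup i α ∈ qpIter V m (k + m) (projSet i U)) ↔ _
    simp only [mem_qpIter_add_iff]
    constructor
    · intro h u
      obtain ⟨i, w, rfl⟩ := Fin.exists_eq_trans_succAboveEmb u (Nat.le_add_right k m)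
      obtain ⟨_, ⟨β, hβ, rfl⟩, hβα⟩ := h i w
      exact ⟨β, hβ, hβα⟩
    · intro h i w
      obtain ⟨β, hβ, hβα⟩ := h (w.trans (Fin.succAboveEmb i))
      exact ⟨projTup i β, ⟨β, hβ, rfl⟩, hβα⟩

theorem mem_qpIter_iff {k N : ℕ} (hk : k ≤ N) {U : Set (Tup N V)} {α : Tup N V} :
    α ∈ qpIter V (N - k) N U ↔ ∀ w : Fin k ↪ Fin N, w.trans α ∈ (fun β => w.trans β) '' U := by
  obtain ⟨m, rfl⟩ := Nat.exists_eq_add_of_le hk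
  rw [Nat.add_sub_cancel_left]
  exact mem_qpIter_add_iff

theorem subset_qpIter : ∀ (m N : ℕ) (U : Set (Tup N V)), U ⊆ qpIter V m N U
  | 0, _, _ => subset_rfl
  | _ + 1, 0, _ => subset_rfl
  | m + 1, _ + 1, U => fun α hα i => subset_qpIter m _ (projSet i U) ⟨α, hα, rfl⟩

section Orbits

variable {k : ℕ}

theorem trans_actTup {N : ℕ} (w : Fin k ↪ Fin N) (g : Equiv.Perm V) (α : Tup N V) :
    w.trans (actTup g α) = actTup g (w.trans α) :=
  rfl

theorem actTup_injective (g : Equiv.Perm V) : Function.Injective (actTup g : Tup k V → Tup k V) :=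
  fun _ _ h => Function.Embedding.ext fun j => g.injective (DFunLike.congr_fun h j)

theorem image_trans_orbitOf {N : ℕ} (G : Set (Equiv.Perm V)) (w : Fin k ↪ Fin N)
    (α : Tup N V) :
    (fun β => w.trans β) '' orbitOf G α = orbitOf G (w.trans α) := by
  ext γ
  constructor
  · rintro ⟨_, ⟨g, hg, rfl⟩, rfl⟩
    exact ⟨g, hg, rfl⟩
  · rintro ⟨g, hg, rfl⟩
    exact ⟨actTup g α, ⟨g, hg, rfl⟩, rfl⟩

variable (G : Subgroup (Equiv.Perm V))

theorem mem_orbitOf_self (α : Tup k V) : α ∈ orbitOf {g | g ∈ G} α :=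
  ⟨1, G.one_mem, rfl⟩

theorem mem_orbitOf_trans {α β γ : Tup k V} (hβ : β ∈ orbitOf {g | g ∈ G} α)
    (hγ : γ ∈ orbitOf {g | g ∈ G} β) : γ ∈ orbitOf {g | g ∈ G} α := by
  obtain ⟨g, hg, rfl⟩ := hβ
  obtain ⟨h, hh, rfl⟩ := hγ
  exact ⟨h * g, G.mul_mem hh hg, rfl⟩

/-- Backwards: `g` maps each finite orbit injectively into itself, hence onto itself. -/
theorem mem_autP_orbPart_iff [Finite V] {g : Equiv.Perm V} :
    g ∈ AutP (OrbPart k G) ↔ ∀ β : Tup k V, actTup g β ∈ orbitOf {g | g ∈ G} β := by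
  constructor
  · intro hg β
    rw [← hg _ ⟨β, rfl⟩]
    exact ⟨β, mem_orbitOf_self G β, rfl⟩
  · rintro hg _ ⟨β, rfl⟩
    have hmaps : Set.MapsTo (actTup g) (orbitOf {g | g ∈ G} β) (orbitOf {g | g ∈ G} β) :=
      fun γ hγ => mem_orbitOf_trans G hγ (hg γ)
    exact ((Set.toFinite _).injOn_iff_bijOn_of_mapsTo hmaps |>.mp
      (actTup_injective g).injOn).image_eq

end Orbits

section FullTuples

variable [Fintype V]

theorem Tup.bijective_of_card (α : Tup (Fintype.card V) V) : Function.Bijective α :=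
  (Fintype.bijective_iff_injective_and_card α).mpr ⟨α.injective, Fintype.card_fin _⟩

theorem exists_actTup_eq (α₀ α : Tup (Fintype.card V) V) : ∃ g, actTup g α₀ = α :=
  ⟨(Equiv.ofBijective α₀ (Tup.bijective_of_card α₀)).symm.trans
      (Equiv.ofBijective α (Tup.bijective_of_card α)),
    Function.Embedding.ext fun j => by simp [actTup]⟩

theorem actTup_left_injective (α₀ : Tup (Fintype.card V) V) :
    Function.Injective fun g : Equiv.Perm V => actTup g α₀ := by
  intro g h hgh
  ext x
  obtain ⟨j, rfl⟩ := (Tup.bijective_of_card α₀).surjective x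
  exact DFunLike.congr_fun hgh j

theorem exists_trans_eq {k : ℕ} (α₀ : Tup (Fintype.card V) V) (β : Tup k V) :
    ∃ w : Fin k ↪ Fin (Fintype.card V), w.trans α₀ = β :=
  ⟨β.trans (Equiv.ofBijective α₀ (Tup.bijective_of_card α₀)).symm.toEmbedding,
    Function.Embedding.ext fun j =>
      (Equiv.ofBijective α₀ (Tup.bijective_of_card α₀)).apply_symm_apply (β j)⟩

theorem actTup_mem_qpIter_orbitOf_iff {k : ℕ} (hk : k ≤ Fintype.card V)
    (G : Subgroup (Equiv.Perm V)) (α₀ : Tup (Fintype.card V) V) (g : Equiv.Perm V) :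
    actTup g α₀ ∈ qpIter V (Fintype.card V - k) (Fintype.card V) (orbitOf {g | g ∈ G} α₀) ↔
      g ∈ AutP (OrbPart k G) := by
  simp only [mem_qpIter_iff hk, image_trans_orbitOf, trans_actTup, mem_autP_orbPart_iff]
  refine ⟨fun h β => ?_, fun h w => h _⟩
  obtain ⟨w, rfl⟩ := exists_trans_eq α₀ β
  exact h w

end FullTuples

end

/-- A permutation group `G` on `V`, `|V| = n ≥ k`, is `k`-closed
(`Aut(Orb_k(G)) = G`) iff every class of `Orb_n(G)` is `k`-full
(`q̂^{n−k} p̂^{n−k} U = U`). -/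
theorem kClosed_iff_orb_card_full {V : Type*} [Fintype V] (k : ℕ)
    (hk : k ≤ Fintype.card V) (G : Subgroup (Equiv.Perm V)) :
    (∀ g : Equiv.Perm V, g ∈ AutP (OrbPart k G) ↔ g ∈ G) ↔
      (∀ U ∈ OrbPart (Fintype.card V) G,
        qpIter V (Fintype.card V - k) (Fintype.card V) U = U) := by
  constructor
  · rintro hclosed _ ⟨α₀, rfl⟩
    refine (subset_qpIter _ _ _).antisymm' fun α hα => ?_
    obtain ⟨g, rfl⟩ := exists_actTup_eq α₀ α
    exact ⟨g, (hclosed g).mp ((actTup_mem_qpIter_orbitOf_iff hk G α₀ g).mp hα), rfl⟩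
  · intro hfull g
    refine ⟨fun hg => ?_, fun hg => (mem_autP_orbPart_iff G).mpr fun β => ⟨g, hg, rfl⟩⟩
    let α₀ : Tup (Fintype.card V) V := (Fintype.equivFin V).symm.toEmbedding
    have hgα₀ := (actTup_mem_qpIter_orbitOf_iff hk G α₀ g).mpr hg
    rw [hfull _ ⟨α₀, rfl⟩] at hgα₀
    obtain ⟨h, hh, hhg⟩ := hgα₀
    exact actTup_left_injective α₀ hhg ▸ hh
end

section
/- Let L_k be an automorphic k-partition of V^(k) with |V| = n. Then for every i ∈ {1,…,n−k}, projecting the assembled partition back recovers L_k: p̂^i q̂^i L_k = L_k, where q̂^i L_k is the (k+i)-partition obtained by i-fold assembling and p̂^i projects (k+i)-tuples back to their k-projections. -/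
/-! Every automorphism of `L` preserves every class of `q̂^i L`, so the projection `P` of such a
class to `k` ordered positions is an `Aut(L)`-invariant set. Peeling off one coordinate at a time,
`P` lies inside a single class of `L`, which is an `Aut(L)`-orbit; a nonempty invariant subset of
an orbit is the whole orbit, so `P` is a class of `L`. Conversely, since `k + i ≤ n`, every
`k`-tuple extends to a `(k + i)`-tuple of distinct elements, and the projection of its class
recovers the class of `L` it started from. -/

theorem Function.Embedding.exists_trans_eq_of_card_le {ι κ V : Type*} [Finite ι] [Fintype κ]
    [Fintype V] (w : ι ↪ κ) (α : ι ↪ V) (h : Fintype.card κ ≤ Fintype.card V) :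
    ∃ α' : κ ↪ V, w.trans α' = α := by
  obtain ⟨e⟩ := Function.Embedding.nonempty_of_card_le h
  obtain ⟨σ, hσ⟩ := Equiv.Perm.exists_extending_pair _ _ (w.trans e).injective α.injective
  exact ⟨e.trans σ.toEmbedding, Function.Embedding.ext hσ⟩

theorem Fin.coe_orderEmbedding_self_eq_id {k : ℕ} (w : Fin k ↪o Fin k) : ⇑w = id :=
  congrArg DFunLike.coe (Subsingleton.elim
    (RelIso.ofSurjective w (Finite.surjective_of_injective w.injective)) (OrderIso.refl _))

theorem Fin.exists_orderEmbedding_eq_succAbove {k n : ℕ} (w : Fin k ↪o Fin (n + 1))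
    (hkn : k ≤ n) :
    ∃ (j : Fin (n + 1)) (w' : Fin k ↪o Fin n), ∀ x, w x = j.succAbove (w' x) := by
  obtain ⟨j, hj⟩ : ∃ j, j ∉ Set.range w := by
    by_contra! h
    have := Fintype.card_le_of_surjective w (Set.range_eq_univ.1 (Set.eq_univ_of_forall h))
    simp only [Fintype.card_fin] at this
    omega
  choose f hf using fun x =>
    Fin.exists_succAbove_eq (ne_of_mem_of_not_mem (Set.mem_range_self x) hj)
  refine ⟨j, OrderEmbedding.ofStrictMono f fun a b hab => ?_, fun x => (hf x).symm⟩
  rw [← Fin.succAbove_lt_succAbove_iff (p := j), hf, hf]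
  exact w.strictMono hab

section Action

variable {V : Type*} {k : ℕ}

theorem actTup_inv_actTup (g : Equiv.Perm V) (α : Tup k V) : actTup g⁻¹ (actTup g α) = α := by
  ext; simp [actTup]

theorem actTup_actTup_inv (g : Equiv.Perm V) (α : Tup k V) : actTup g (actTup g⁻¹ α) = α := by
  ext; simp [actTup]

theorem projTup_actTup (g : Equiv.Perm V) (j : Fin (k + 1)) (α : Tup (k + 1) V) :
    projTup j (actTup g α) = actTup g (projTup j α) :=
  rfl

theorem image_actTup_eq_iff {g : Equiv.Perm V} {P : Set (Tup k V)} :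
    actTup g '' P = P ↔ ∀ α, actTup g α ∈ P ↔ α ∈ P := by
  constructor
  · intro h α
    conv_lhs => rw [← h]
    exact (Function.LeftInverse.injective (actTup_inv_actTup g)).mem_set_image
  · intro h
    ext β
    refine ⟨fun ⟨α, hα, hαβ⟩ => hαβ ▸ (h α).2 hα, fun hβ => ⟨actTup g⁻¹ β, ?_, ?_⟩⟩
    · rwa [← h, actTup_actTup_inv]
    · exact actTup_actTup_inv g β

theorem image_actTup_image_trans_eq {m : ℕ} {g : Equiv.Perm V} {S : Set (Tup m V)}
    (h : actTup g '' S = S) (w : Fin k ↪ Fin m) :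
    actTup g '' ((fun α => w.trans α) '' S) = (fun α => w.trans α) '' S := by
  conv_rhs => rw [← h]
  simp only [Set.image_image]
  rfl

theorem eq_orbitOf_of_subset {G : Set (Equiv.Perm V)} {P : Set (Tup k V)} {α : Tup k V}
    (hP : ∀ g ∈ G, actTup g '' P = P) (hne : P.Nonempty) (hsub : P ⊆ orbitOf G α) :
    P = orbitOf G α := by
  refine hsub.antisymm ?_
  obtain ⟨β, hβ⟩ := hne
  obtain ⟨g, hg, rfl⟩ := hsub hβ
  have hα : α ∈ P := (image_actTup_eq_iff.1 (hP g hg) α).1 hβ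
  rintro _ ⟨h, hh, rfl⟩
  exact (image_actTup_eq_iff.1 (hP h hh) α).2 hα

end Action

section Assemble

variable {V : Type*} {k : ℕ}

def qSetoid (L : Set (Set (Tup k V))) : Setoid (Tup (k + 1) V) where
  r := qRel L
  iseqv :=
    { refl := fun _ _ _ _ => Iff.rfl
      symm := fun h i U hU => (h i U hU).symm
      trans := fun h₁ h₂ i U hU => (h₁ i U hU).trans (h₂ i U hU) }

theorem qPart_eq_classes (L : Set (Set (Tup k V))) : qPart L = (qSetoid L).classes := by
  ext S
  refine exists_congr fun α => ?_
  suffices {β | qRel L α β} = {β | qSetoid L β α} by rw [this]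
  ext β
  exact (qSetoid L).comm

theorem qPart_isPartition (L : Set (Set (Tup k V))) : Setoid.IsPartition (qPart L) :=
  qPart_eq_classes L ▸ Setoid.isPartition_classes _

theorem qIter_isPartition {L : Set (Set (Tup k V))} (hL : Setoid.IsPartition L) :
    ∀ m, Setoid.IsPartition (qIter V m k L)
  | 0 => hL
  | _ + 1 => qPart_isPartition _

theorem AutP_subset_AutP_qPart (M : Set (Set (Tup k V))) : AutP M ⊆ AutP (qPart M) := by
  rintro g hg _ ⟨α, rfl⟩
  refine image_actTup_eq_iff.2 fun β => forall_congr' fun j => forall₂_congr fun U hU => ?_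
  rw [projTup_actTup, image_actTup_eq_iff.1 (hg U hU)]

theorem AutP_subset_AutP_qIter (L : Set (Set (Tup k V))) :
    ∀ m, AutP L ⊆ AutP (qIter V m k L)
  | 0 => subset_rfl
  | m + 1 => (AutP_subset_AutP_qIter L m).trans (AutP_subset_AutP_qPart _)

theorem exists_projSet_subset_of_mem_qPart {M : Set (Set (Tup k V))} (hM : Setoid.IsPartition M)
    {S : Set (Tup (k + 1) V)} (hS : S ∈ qPart M) (j : Fin (k + 1)) :
    ∃ U ∈ M, projSet j S ⊆ U := by
  obtain ⟨α, rfl⟩ := hS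
  obtain ⟨U, ⟨hU, hαU⟩, -⟩ := hM.2 (projTup j α)
  refine ⟨U, hU, ?_⟩
  rintro _ ⟨β, hβ, rfl⟩
  exact (hβ j U hU).1 hαU

theorem exists_image_subset_of_mem_qIter {L : Set (Set (Tup k V))} (hL : Setoid.IsPartition L) :
    ∀ m, ∀ S ∈ qIter V m k L, ∀ w : Fin k ↪o Fin (k + m),
      ∃ C ∈ L, (fun α => w.toEmbedding.trans α) '' S ⊆ C
  | 0, S, hS, w => ⟨S, hS, by
      rintro _ ⟨α, hα, rfl⟩
      show w.toEmbedding.trans α ∈ S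
      rwa [show w.toEmbedding.trans α = α from Function.Embedding.ext fun x =>
        congrArg α (congrFun (Fin.coe_orderEmbedding_self_eq_id w) x)]⟩
  | m + 1, S, hS, w => by
      obtain ⟨j, w', hw⟩ := 
        Fin.exists_orderEmbedding_eq_succAbove (n := k + m) w (Nat.le_add_right k m)
      obtain ⟨U, hU, hSU⟩ := exists_projSet_subset_of_mem_qPart (qIter_isPartition hL m) hS j
      obtain ⟨C, hC, hUC⟩ := exists_image_subset_of_mem_qIter hL m U hU w'
      have hfactor : (fun α : Tup (k + (m + 1)) V => w.toEmbedding.trans α) =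
          (fun β => w'.toEmbedding.trans β) ∘ projTup j := by
        funext α
        ext x
        exact congrArg α (hw x)
      refine ⟨C, hC, ?_⟩
      rw [hfactor, Set.image_comp]
      exact (Set.image_mono hSU).trans hUC

end Assemble

theorem pIter_qIter_subset {V : Type*} {k : ℕ} {L : Set (Set (Tup k V))}
    (hL : Setoid.IsPartition L) (hauto : Automorphic L) (i : ℕ) :
    pIter i k (qIter V i k L) ⊆ L := by
  rintro _ ⟨S, hS, w, rfl⟩
  obtain ⟨C, hC, hSC⟩ := exists_image_subset_of_mem_qIter hL i S hS w
  obtain ⟨α, rfl⟩ := (hauto C).1 hC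
  rwa [eq_orbitOf_of_subset (fun g hg => image_actTup_image_trans_eq
    (AutP_subset_AutP_qIter L i hg S hS) _)
    ((Setoid.nonempty_of_mem_partition (qIter_isPartition hL i) hS).image _) hSC]

theorem subset_pIter_qIter {V : Type*} [Fintype V] {k i : ℕ} {L : Set (Set (Tup k V))}
    (hL : Setoid.IsPartition L) (hauto : Automorphic L) (hi : i ≤ Fintype.card V - k) :
    L ⊆ pIter i k (qIter V i k L) := by
  intro C hC
  obtain ⟨α, hα⟩ := Setoid.nonempty_of_mem_partition hL hC
  let w : Fin k ↪o Fin (k + i) := Fin.castLEOrderEmb (Nat.le_add_right k i)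
  obtain ⟨α', hα'⟩ := w.toEmbedding.exists_trans_eq_of_card_le α (by
    have := Fintype.card_le_of_embedding α
    simp only [Fintype.card_fin] at this ⊢
    omega)
  obtain ⟨S, ⟨hS, hα'S⟩, -⟩ := (qIter_isPartition hL i).2 α'
  have hP : (fun β => w.toEmbedding.trans β) '' S ∈ pIter i k (qIter V i k L) := ⟨S, hS, w, rfl⟩
  rwa [Setoid.eq_of_mem_eqv_class hL.2 hC hα (pIter_qIter_subset hL hauto i hP) ⟨α', hα'S, hα'⟩]

theorem pIter_qIter_eq_of_automorphic_general {V : Type*} [Fintype V] (k i : ℕ)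
    (L : Set (Set (Tup k V))) (hL : Setoid.IsPartition L) (hauto : Automorphic L)
    (hi2 : i ≤ Fintype.card V - k) :
    pIter i k (qIter V i k L) = L :=
  (pIter_qIter_subset hL hauto i).antisymm (subset_pIter_qIter hL hauto hi2)

/-- If `L` is an automorphic `k`-partition of `V^(k)`, `|V| = n`, then for
every `i ∈ {1, …, n − k}`, `p̂^i q̂^i L = L`. -/
theorem pIter_qIter_eq_of_automorphic {V : Type*} [Fintype V] (k i : ℕ)
    (L : Set (Set (Tup k V))) (hL : Setoid.IsPartition L) (hauto : Automorphic L)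
    (hi1 : 1 ≤ i) (hi2 : i ≤ Fintype.card V - k) :
    pIter i k (qIter V i k L) = L :=
  pIter_qIter_eq_of_automorphic_general k i L hL hauto hi2
end
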